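/- With the induction construction as above, for maps μ₁, μ₂ : Λ → U(ℋ) with induced maps μ̄₁, μ̄₂ : Γ → U(ℓ²(ℛ, ℋ)), one has sup_{γ∈Γ} ‖μ̄₁(γ) - μ̄₂(γ)‖ = sup_{λ∈Λ} ‖μ₁(λ) - μ₂(λ)‖. -/

import Mathlib

open scoped ENNReal NNReal

lemma unitary_norm_le_one' {A : Type*} [NormedRing A] [StarRing A] [CStarRing A]
    (h1 : ‖(1 : A)‖ ≤ 1) {u : A} (hu : u ∈ unitary A) : ‖u‖ ≤ 1 := by
  have h := CStarRing.norm_star_mul_self (x := u)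
  rw [(Unitary.mem_iff.mp hu).1] at h
  nlinarith [norm_nonneg u]



/-- For maps `μ₁, μ₂ : Λ → U(H)` with induced maps `μ̄₁, μ̄₂ : Γ → U(ℓ²(ℛ, H))`,
the uniform distances agree: `sup_γ ‖μ̄₁ γ - μ̄₂ γ‖ = sup_λ ‖μ₁ λ - μ₂ λ‖`. -/
theorem stmt6 {Γ : Type*} [Group Γ] (Λ : Subgroup Γ) {H : Type*}
    [NormedAddCommGroup H] [InnerProductSpace ℂ H] [CompleteSpace H]
    (r : Γ → Γ) (hr : ∀ γ, γ * (r γ)⁻¹ ∈ Λ)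
    (hrc : ∀ l γ : Γ, l ∈ Λ → r (l * γ) = r γ)
    (μ₁ μ₂ : Λ → (H →L[ℂ] H))
    (hμ₁ : ∀ l, μ₁ l ∈ unitary (H →L[ℂ] H)) (hμ₂ : ∀ l, μ₂ l ∈ unitary (H →L[ℂ] H))
    (Mbar₁ Mbar₂ : Γ → (lp (fun _ : Set.range r => H) 2 →L[ℂ] lp (fun _ : Set.range r => H) 2))
    (hMu₁ : ∀ γ, Mbar₁ γ ∈ unitary (lp (fun _ : Set.range r => H) 2 →L[ℂ] lp (fun _ : Set.range r => H) 2))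
    (hMu₂ : ∀ γ, Mbar₂ γ ∈ unitary (lp (fun _ : Set.range r => H) 2 →L[ℂ] lp (fun _ : Set.range r => H) 2))
    (hform₁ : ∀ (γ : Γ) (f : lp (fun _ : Set.range r => H) 2) (x : Set.range r),
      (Mbar₁ γ f) x
        = μ₁ ⟨(x : Γ) * γ * (r ((x : Γ) * γ))⁻¹, hr ((x : Γ) * γ)⟩
            (f ⟨r ((x : Γ) * γ), ⟨(x : Γ) * γ, rfl⟩⟩))
    (hform₂ : ∀ (γ : Γ) (f : lp (fun _ : Set.range r => H) 2) (x : Set.range r),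
      (Mbar₂ γ f) x
        = μ₂ ⟨(x : Γ) * γ * (r ((x : Γ) * γ))⁻¹, hr ((x : Γ) * γ)⟩
            (f ⟨r ((x : Γ) * γ), ⟨(x : Γ) * γ, rfl⟩⟩)) :
    (⨆ γ : Γ, ‖Mbar₁ γ - Mbar₂ γ‖) = ⨆ l : Λ, ‖μ₁ l - μ₂ l‖ := by
  classical
  -- retraction facts
  have hret : ∀ z : Γ, r (r z) = r z := by
    intro z
    have h := hrc (z * (r z)⁻¹) (r z) (hr z)
    rw [inv_mul_cancel_right] at h
    exact h.symm
  have hkey : ∀ z γ : Γ, r (r z * γ) = r (z * γ) := by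
    intro z γ
    have h := hrc (z * (r z)⁻¹) (r z * γ) (hr z)
    rw [show z * (r z)⁻¹ * (r z * γ) = z * γ by group] at h
    exact h.symm
  have hfix : ∀ x : (Set.range r), r (x : Γ) = (x : Γ) := by rintro ⟨-, z, rfl⟩; exact hret z
  have hinv : ∀ (x : (Set.range r)) (γ : Γ), r (r ((x : Γ) * γ) * γ⁻¹) = (x : Γ) := by
    intro x γ
    rw [hkey, mul_inv_cancel_right, hfix]
  have hp2 : 0 < (2 : ℝ≥0∞).toReal := by norm_num
  -- bounds
  have h1H : ‖(1 : H →L[ℂ] H)‖ ≤ 1 := by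
    rw [ContinuousLinearMap.one_def]; exact ContinuousLinearMap.norm_id_le
  have h1L : ‖(1 : lp (fun _ : (Set.range r) => H) 2 →L[ℂ] lp (fun _ : (Set.range r) => H) 2)‖ ≤ 1 := by
    rw [ContinuousLinearMap.one_def]; exact ContinuousLinearMap.norm_id_le
  have bddC : BddAbove (Set.range fun l : Λ => ‖μ₁ l - μ₂ l‖) := by
    refine ⟨2, ?_⟩; rintro - ⟨l, rfl⟩
    calc ‖μ₁ l - μ₂ l‖ ≤ ‖μ₁ l‖ + ‖μ₂ l‖ := norm_sub_le _ _
      _ ≤ 1 + 1 := add_le_add (unitary_norm_le_one' h1H (hμ₁ l)) (unitary_norm_le_one' h1H (hμ₂ l))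
      _ = 2 := by norm_num
  have bddD : BddAbove (Set.range fun γ : Γ => ‖Mbar₁ γ - Mbar₂ γ‖) := by
    refine ⟨2, ?_⟩; rintro - ⟨γ, rfl⟩
    calc ‖Mbar₁ γ - Mbar₂ γ‖ ≤ ‖Mbar₁ γ‖ + ‖Mbar₂ γ‖ := norm_sub_le _ _
      _ ≤ 1 + 1 := add_le_add (unitary_norm_le_one' h1L (hMu₁ γ)) (unitary_norm_le_one' h1L (hMu₂ γ))
      _ = 2 := by norm_num
  set C := ⨆ l : Λ, ‖μ₁ l - μ₂ l‖ with hC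
  set D := ⨆ γ : Γ, ‖Mbar₁ γ - Mbar₂ γ‖ with hD
  have hC0 : 0 ≤ C := le_trans (norm_nonneg (μ₁ 1 - μ₂ 1)) (le_ciSup bddC 1)
  have hD0 : 0 ≤ D := le_trans (norm_nonneg (Mbar₁ 1 - Mbar₂ 1)) (le_ciSup bddD 1)
  -- direction 1 : each ‖Mbar₁ γ - Mbar₂ γ‖ ≤ C
  have hCγ : ∀ γ : Γ, ‖Mbar₁ γ - Mbar₂ γ‖ ≤ C := by
    intro γ
    refine ContinuousLinearMap.opNorm_le_bound _ hC0 fun f => ?_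
    let e : (Set.range r) ≃ (Set.range r) :=
      ⟨fun x => ⟨r ((x : Γ) * γ), ⟨(x : Γ) * γ, rfl⟩⟩,
       fun x => ⟨r ((x : Γ) * γ⁻¹), ⟨(x : Γ) * γ⁻¹, rfl⟩⟩,
       fun x => Subtype.ext (hinv x γ),
       fun x => Subtype.ext (by simpa using hinv x γ⁻¹)⟩
    set g := (Mbar₁ γ - Mbar₂ γ) f with hg
    have hpt : ∀ x : (Set.range r), ‖g x‖ ≤ C * ‖f (e x)‖ := by
      intro x
      have h2 : g x = (Mbar₁ γ f) x - (Mbar₂ γ f) x := by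
        simp only [hg, ContinuousLinearMap.sub_apply, lp.coeFn_sub, Pi.sub_apply]
      have h1 : g x = (μ₁ ⟨(x : Γ) * γ * (r ((x : Γ) * γ))⁻¹, hr ((x : Γ) * γ)⟩
            - μ₂ ⟨(x : Γ) * γ * (r ((x : Γ) * γ))⁻¹, hr ((x : Γ) * γ)⟩) (f (e x)) := by
        rw [h2, hform₁, hform₂, ContinuousLinearMap.sub_apply]
        rfl
      rw [h1]
      calc ‖_‖ ≤ ‖μ₁ _ - μ₂ _‖ * ‖f (e x)‖ := ContinuousLinearMap.le_opNorm _ _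
        _ ≤ C * ‖f (e x)‖ :=
          mul_le_mul_of_nonneg_right (le_ciSup bddC _) (norm_nonneg _)
    refine lp.norm_le_of_tsum_le hp2 (mul_nonneg hC0 (norm_nonneg f)) ?_
    have hsumf : Summable fun y : (Set.range r) => ‖f y‖ ^ (2 : ℝ≥0∞).toReal := (lp.memℓp f).summable hp2
    have hsumfe : Summable fun x : (Set.range r) => ‖f (e x)‖ ^ (2 : ℝ≥0∞).toReal :=
      hsumf.comp_injective e.injective
    calc ∑' x : (Set.range r), ‖g x‖ ^ (2 : ℝ≥0∞).toReal
        ≤ ∑' x : (Set.range r), (C * ‖f (e x)‖) ^ (2 : ℝ≥0∞).toReal := by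
          refine Summable.tsum_le_tsum (fun x => Real.rpow_le_rpow (norm_nonneg _) (hpt x) hp2.le)
            ((lp.memℓp g).summable hp2) ?_
          simpa [Real.mul_rpow hC0 (norm_nonneg _)] using
            hsumfe.mul_left (C ^ (2 : ℝ≥0∞).toReal)
      _ = C ^ (2 : ℝ≥0∞).toReal * ∑' x : (Set.range r), ‖f (e x)‖ ^ (2 : ℝ≥0∞).toReal := by
          simp_rw [Real.mul_rpow hC0 (norm_nonneg _)]; exact tsum_mul_left
      _ = C ^ (2 : ℝ≥0∞).toReal * ∑' y : (Set.range r), ‖f y‖ ^ (2 : ℝ≥0∞).toReal := by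
          rw [e.tsum_eq fun y : (Set.range r) => ‖f y‖ ^ (2 : ℝ≥0∞).toReal]
      _ = (C * ‖f‖) ^ (2 : ℝ≥0∞).toReal := by
          rw [← lp.norm_rpow_eq_tsum hp2, Real.mul_rpow hC0 (norm_nonneg _)]
  -- direction 2 : each ‖μ₁ l - μ₂ l‖ ≤ D
  have hDl : ∀ l : Λ, ‖μ₁ l - μ₂ l‖ ≤ D := by
    intro l
    refine ContinuousLinearMap.opNorm_le_bound _ hD0 fun v => ?_
    set γ : Γ := (r 1)⁻¹ * (l : Γ) * r 1 with hγ
    set x₀ : (Set.range r) := ⟨r 1, ⟨1, rfl⟩⟩ with hx₀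
    have hx : r ((x₀ : Γ) * γ) = r 1 := by
      have h1 : (x₀ : Γ) * γ = (l : Γ) * r 1 := by
        show r 1 * ((r 1)⁻¹ * (l : Γ) * r 1) = (l : Γ) * r 1
        group
      rw [h1, hrc _ _ l.2, hret]
    set f : lp (fun _ : (Set.range r) => H) 2 := lp.single 2 x₀ v with hf
    set g := (Mbar₁ γ - Mbar₂ γ) f with hg
    have hgx : g x₀ = (μ₁ l - μ₂ l) v := by
      have h2 : g x₀ = (Mbar₁ γ f) x₀ - (Mbar₂ γ f) x₀ := by
        simp only [hg, ContinuousLinearMap.sub_apply, lp.coeFn_sub, Pi.sub_apply]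
      rw [h2, hform₁, hform₂]
      have hidx : (⟨r ((x₀ : Γ) * γ), ⟨(x₀ : Γ) * γ, rfl⟩⟩ : (Set.range r)) = x₀ := Subtype.ext hx
      have hlam : (⟨(x₀ : Γ) * γ * (r ((x₀ : Γ) * γ))⁻¹, hr ((x₀ : Γ) * γ)⟩ : Λ) = l := by
        refine Subtype.ext ?_
        rw [show ((⟨(x₀ : Γ) * γ * (r ((x₀ : Γ) * γ))⁻¹, hr ((x₀ : Γ) * γ)⟩ : Λ) : Γ)
            = (x₀ : Γ) * γ * (r ((x₀ : Γ) * γ))⁻¹ from rfl, hx]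
        show r 1 * ((r 1)⁻¹ * (l : Γ) * r 1) * (r 1)⁻¹ = (l : Γ)
        group
      rw [hidx, hlam]
      have hfl : f x₀ = v := by rw [hf]; exact lp.single_apply_self (E := fun _ : Set.range r => H) 2 x₀ v
      rw [hfl, ContinuousLinearMap.sub_apply]
    calc ‖(μ₁ l - μ₂ l) v‖ = ‖g x₀‖ := by rw [hgx]
      _ ≤ ‖g‖ := lp.norm_apply_le_norm (by norm_num) g x₀
      _ ≤ ‖Mbar₁ γ - Mbar₂ γ‖ * ‖f‖ := ContinuousLinearMap.le_opNorm _ f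
      _ = ‖Mbar₁ γ - Mbar₂ γ‖ * ‖v‖ := by
          rw [show ‖f‖ = ‖v‖ from lp.norm_single (E := fun _ : (Set.range r) => H) (by norm_num) x₀ v]
      _ ≤ D * ‖v‖ := mul_le_mul_of_nonneg_right (le_ciSup bddD γ) (norm_nonneg _)
  exact le_antisymm (ciSup_le hCγ) (ciSup_le hDl)
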